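/- Let λ ∈ (0,1] and let X ⊆ ℝⁿ and U ⊆ ℝᵐ be C-sets. Then d(Q_k^λ(C), Q_k^λ(D)) ≤ d(C,D) for every k ∈ ℕ and all C-sets C, D ⊆ ℝⁿ with C ⊆ D. -/

import Mathlib

open Set Metric Pointwise

noncomputable section

abbrev Euc (n : ℕ) := EuclideanSpace ℝ (Fin n)

def IsCSet {n : ℕ} (C : Set (Euc n)) : Prop :=
  Convex ℝ C ∧ IsCompact C ∧ (0 : Euc n) ∈ interior C

def rho {n : ℕ} (ξ : Euc n) (C : Set (Euc n)) : ℝ :=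
  sSup {μ : ℝ | 0 < μ ∧ μ • ξ ∈ C}

def cdist {n : ℕ} (C D : Set (Euc n)) : ℝ :=
  ⨆ ξ : sphere (0 : Euc n) 1, |Real.log (rho ξ C) - Real.log (rho ξ D)|

def Q1 {n m : ℕ} (A : Matrix (Fin n) (Fin n) ℝ) (B : Matrix (Fin n) (Fin m) ℝ)
    (X : Set (Euc n)) (U : Set (Euc m)) (lam : ℝ) (D : Set (Euc n)) : Set (Euc n) :=
  {x ∈ X | ∃ u ∈ U, WithLp.toLp 2 (A.mulVec x + B.mulVec u) ∈ lam • D}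

def Qiter {n m : ℕ} (A : Matrix (Fin n) (Fin n) ℝ) (B : Matrix (Fin n) (Fin m) ℝ)
    (X : Set (Euc n)) (U : Set (Euc m)) (lam : ℝ) (D : Set (Euc n)) : ℕ → Set (Euc n)
  | 0 => D
  | k + 1 => Q1 A B X U lam (Qiter A B X U lam D k)

def IsContractive {n m : ℕ} (A : Matrix (Fin n) (Fin n) ℝ) (B : Matrix (Fin n) (Fin m) ℝ)
    (X : Set (Euc n)) (U : Set (Euc m)) (lam : ℝ) (C : Set (Euc n)) : Prop :=
  C ⊆ X ∧ ∀ x ∈ C, ∃ u ∈ U, WithLp.toLp 2 (A.mulVec x + B.mulVec u) ∈ lam • C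

def Cmax {n m : ℕ} (A : Matrix (Fin n) (Fin n) ℝ) (B : Matrix (Fin n) (Fin m) ℝ)
    (X : Set (Euc n)) (U : Set (Euc m)) (lam : ℝ) : Set (Euc n) :=
  ⋃₀ {C | IsContractive A B X U lam C}

def ctrb {n m : ℕ} (A : Matrix (Fin n) (Fin n) ℝ) (B : Matrix (Fin n) (Fin m) ℝ) :
    Matrix (Fin n) (Fin n × Fin m) ℝ :=
  Matrix.of fun i p => (A ^ (n - 1 - (p.1 : ℕ)) * B) i p.2

def Controllable {n m : ℕ} (A : Matrix (Fin n) (Fin n) ℝ)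
    (B : Matrix (Fin n) (Fin m) ℝ) : Prop :=
  (ctrb A B).rank = n

def enorm {ι : Type*} [Fintype ι] (v : ι → ℝ) : ℝ :=
  ‖(WithLp.equiv 2 (ι → ℝ)).symm v‖

def sigmaMax {n : ℕ} {ι : Type*} [Fintype ι] (Φ : Matrix (Fin n) ι ℝ) : ℝ :=
  ⨆ ξ : sphere (0 : EuclideanSpace ℝ ι) 1, enorm (Φ.mulVec ξ)

def sigmaMin {n : ℕ} {ι : Type*} [Fintype ι] (Φ : Matrix (Fin n) ι ℝ) : ℝ :=
  ⨅ ξ : sphere (0 : Euc n) 1, enorm (Φ.transpose.mulVec ξ)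

def alphaA {n : ℕ} (A : Matrix (Fin n) (Fin n) ℝ) : ℝ :=
  max 1 (⨆ j ∈ Finset.Icc 1 n, sigmaMax (A ^ j))

def rhoHat {n m : ℕ} (A : Matrix (Fin n) (Fin n) ℝ) (B : Matrix (Fin n) (Fin m) ℝ)
    (lam rx ru : ℝ) : ℝ :=
  lam ^ (n - 1) / alphaA A *
    min (rx / (1 + sigmaMax (ctrb A B) / sigmaMin (ctrb A B)))
        (ru * sigmaMin (ctrb A B))

end

/-!
Put `γ := exp (-d(C, D))`. Comparing gauges ray by ray gives `γ • D ⊆ C ⊆ D`, and conversely any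
such pair of inclusions gives `d(C, D) ≤ -log γ`. Both inclusions survive `Q_k^λ`: it is monotone,
and since the dynamics are linear and `X`, `U` are star-shaped about `0`, scaling a state-input
pair by `γ ∈ (0, 1]` keeps it admissible, so `γ • Q_k^λ(D) ⊆ Q_k^λ(γ • D) ⊆ Q_k^λ(C)`.
-/

open Set Metric Pointwise Real Bornology

lemma abs_log_sub_log_le {a b d : ℝ} (hd : 0 ≤ d) (ha : 0 ≤ a) (hab : a ≤ b)
    (hba : exp (-d) * b ≤ a) : |log a - log b| ≤ d := by
  rcases (ha.trans hab).eq_or_lt with rfl | hb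
  · simp [le_antisymm hab ha, hd]
  have ha' : 0 < a := (mul_pos (exp_pos _) hb).trans_le hba
  have hlog := log_le_log (mul_pos (exp_pos _) hb) hba
  rw [log_mul (exp_pos _).ne' hb.ne', log_exp] at hlog
  rw [abs_sub_comm, abs_of_nonneg (sub_nonneg.2 (log_le_log ha' hab))]
  linarith

section Gauge

variable {n : ℕ} {ξ : Euc n} {S T C : Set (Euc n)}

def raySet (ξ : Euc n) (C : Set (Euc n)) : Set ℝ := {μ : ℝ | 0 < μ ∧ μ • ξ ∈ C}

lemma rho_eq_sSup_raySet (ξ : Euc n) (C : Set (Euc n)) : rho ξ C = sSup (raySet ξ C) := rfl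

lemma rho_nonneg (ξ : Euc n) (C : Set (Euc n)) : 0 ≤ rho ξ C :=
  Real.sSup_nonneg fun _ hμ => hμ.1.le

lemma le_of_mem_raySet {R μ : ℝ} (hS : S ⊆ closedBall 0 R) (hξ : ‖ξ‖ = 1)
    (hμ : μ ∈ raySet ξ S) : μ ≤ R := by
  have := hS hμ.2
  rwa [mem_closedBall_zero_iff, norm_smul, hξ, mul_one, Real.norm_of_nonneg hμ.1.le] at this

lemma bddAbove_raySet (hS : IsBounded S) (hξ : ‖ξ‖ = 1) : BddAbove (raySet ξ S) := by
  obtain ⟨R, hR⟩ := hS.subset_closedBall 0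
  exact ⟨R, fun μ hμ => le_of_mem_raySet hR hξ hμ⟩

lemma rho_le_of_subset_closedBall {R : ℝ} (hS : S ⊆ closedBall 0 R) (hξ : ‖ξ‖ = 1)
    (hR : 0 ≤ R) : rho ξ S ≤ R :=
  Real.sSup_le (fun _ hμ => le_of_mem_raySet hS hξ hμ) hR

lemma le_rho_of_closedBall_subset {r : ℝ} (hS : IsBounded S) (hr : 0 < r)
    (hball : closedBall 0 r ⊆ S) (hξ : ‖ξ‖ = 1) : r ≤ rho ξ S :=
  le_csSup (bddAbove_raySet hS hξ)
    ⟨hr, hball (by rw [mem_closedBall_zero_iff, norm_smul, hξ, mul_one, Real.norm_of_nonneg hr.le])⟩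

lemma mul_rho_le_rho_of_smul_subset {γ : ℝ} (hγ : 0 < γ) (hST : γ • S ⊆ T) (hT : IsBounded T)
    (hξ : ‖ξ‖ = 1) : γ * rho ξ S ≤ rho ξ T := by
  rcases (raySet ξ S).eq_empty_or_nonempty with hS | hS
  · rw [rho_eq_sSup_raySet ξ S, hS, Real.sSup_empty, mul_zero]
    exact rho_nonneg ξ T
  rw [← le_div_iff₀' hγ]
  refine csSup_le hS fun μ hμ => (le_div_iff₀' hγ).2 (le_csSup (bddAbove_raySet hT hξ) ?_)
  refine ⟨mul_pos hγ hμ.1, ?_⟩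
  rw [mul_smul]
  exact hST (smul_mem_smul_set hμ.2)

lemma rho_mono (hST : S ⊆ T) (hT : IsBounded T) (hξ : ‖ξ‖ = 1) : rho ξ S ≤ rho ξ T := by
  simpa using mul_rho_le_rho_of_smul_subset one_pos (by rwa [one_smul]) hT hξ

lemma smul_mem_of_le_rho {μ : ℝ} (hC : IsClosed C) (hC0 : StarConvex ℝ 0 C) (hμ : 0 < μ)
    (hle : μ ≤ rho ξ C) : μ • ξ ∈ C := by
  have hρ : 0 < rho ξ C := hμ.trans_le hle
  -- `rho` is junk-valued `0` on an empty or unbounded ray set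
  have hbdd : BddAbove (raySet ξ C) := by
    by_contra h
    rw [rho_eq_sSup_raySet, Real.sSup_of_not_bddAbove h] at hρ
    exact hρ.false
  have hne : (raySet ξ C).Nonempty := by
    rw [nonempty_iff_ne_empty]
    rintro h
    rw [rho_eq_sSup_raySet, h, Real.sSup_empty] at hρ
    exact hρ.false
  have hρC : rho ξ C • ξ ∈ C :=
    closure_minimal (fun _ ht => ht.2) (hC.preimage (continuous_id.smul continuous_const))
      (csSup_mem_closure hne hbdd)
  have := hC0.smul_mem hρC (div_nonneg hμ.le hρ.le) (div_le_one_of_le₀ hle hρ.le)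
  rwa [smul_smul, div_mul_cancel₀ _ hρ.ne'] at this

lemma IsCSet.starConvex (hC : IsCSet C) : StarConvex ℝ 0 C :=
  hC.1.starConvex (interior_subset hC.2.2)

lemma IsCSet.exists_pos_le_rho (hC : IsCSet C) : ∃ r > 0, ∀ ξ : Euc n, ‖ξ‖ = 1 → r ≤ rho ξ C := by
  obtain ⟨r, hr, hball⟩ := Metric.mem_nhds_iff.mp (mem_interior_iff_mem_nhds.mp hC.2.2)
  exact ⟨r / 2, half_pos hr, fun ξ hξ => le_rho_of_closedBall_subset hC.2.1.isBounded (half_pos hr)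
    ((closedBall_subset_ball (half_lt_self hr)).trans hball) hξ⟩

lemma IsCSet.rho_pos (hC : IsCSet C) (hξ : ‖ξ‖ = 1) : 0 < rho ξ C := by
  obtain ⟨r, hr, hrρ⟩ := hC.exists_pos_le_rho
  exact hr.trans_le (hrρ ξ hξ)

lemma IsCSet.exists_abs_log_rho_le (hC : IsCSet C) :
    ∃ M, ∀ ξ : Euc n, ‖ξ‖ = 1 → |log (rho ξ C)| ≤ M := by
  obtain ⟨r, hr, hrρ⟩ := hC.exists_pos_le_rho
  obtain ⟨R, hR⟩ := hC.2.1.isBounded.subset_closedBall 0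
  have hR0 : 0 ≤ R := nonempty_closedBall.1 ⟨0, hR (interior_subset hC.2.2)⟩
  refine ⟨|log r| + |log R|, fun ξ hξ => abs_le.2 ⟨?_, ?_⟩⟩
  · linarith [log_le_log hr (hrρ ξ hξ), neg_abs_le (log r), abs_nonneg (log R)]
  · linarith [log_le_log (hC.rho_pos hξ) (rho_le_of_subset_closedBall hR hξ hR0),
      le_abs_self (log R), abs_nonneg (log r)]

end Gauge

section Distance

variable {n : ℕ} {C D S T : Set (Euc n)}

lemma cdist_nonneg (C D : Set (Euc n)) : 0 ≤ cdist C D :=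
  Real.iSup_nonneg fun _ => abs_nonneg _

lemma abs_log_rho_sub_le_cdist (hC : IsCSet C) (hD : IsCSet D) {ξ : Euc n} (hξ : ‖ξ‖ = 1) :
    |log (rho ξ C) - log (rho ξ D)| ≤ cdist C D := by
  obtain ⟨M, hM⟩ := hC.exists_abs_log_rho_le
  obtain ⟨N, hN⟩ := hD.exists_abs_log_rho_le
  refine le_ciSup (f := fun η : sphere (0 : Euc n) 1 => |log (rho η C) - log (rho η D)|)
    ⟨M + N, ?_⟩ ⟨ξ, mem_sphere_zero_iff_norm.2 hξ⟩
  rintro _ ⟨η, rfl⟩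
  have hη := mem_sphere_zero_iff_norm.1 η.2
  exact (abs_sub _ _).trans (add_le_add (hM η hη) (hN η hη))

lemma exp_neg_cdist_smul_subset (hC : IsCSet C) (hD : IsCSet D) : exp (-cdist C D) • D ⊆ C := by
  rintro _ ⟨x, hx, rfl⟩
  rcases eq_or_ne x 0 with rfl | hx0
  · simpa using interior_subset hC.2.2
  set ξ : Euc n := ‖x‖⁻¹ • x
  have hξ : ‖ξ‖ = 1 := norm_smul_inv_norm (𝕜 := ℝ) hx0
  have hxξ : ‖x‖ • ξ = x := by simp [ξ, smul_smul, mul_inv_cancel₀ (norm_ne_zero_iff.2 hx0)]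
  have hxρ : ‖x‖ ≤ rho ξ D :=
    le_csSup (bddAbove_raySet hD.2.1.isBounded hξ) ⟨norm_pos_iff.2 hx0, by rwa [hxξ]⟩
  have hDC : exp (-cdist C D) * rho ξ D ≤ rho ξ C := by
    have hlog := (abs_le.1 (abs_log_rho_sub_le_cdist hC hD hξ)).1
    calc exp (-cdist C D) * rho ξ D = exp (log (rho ξ D) - cdist C D) := by
          rw [exp_sub, exp_log (hD.rho_pos hξ), exp_neg]; ring
      _ ≤ exp (log (rho ξ C)) := exp_le_exp.2 (by linarith)
      _ = rho ξ C := exp_log (hC.rho_pos hξ)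
  have := smul_mem_of_le_rho hC.2.1.isClosed hC.starConvex
    (mul_pos (exp_pos _) (norm_pos_iff.2 hx0))
    ((mul_le_mul_of_nonneg_left hxρ (exp_pos _).le).trans hDC)
  rwa [mul_smul, hxξ] at this

lemma cdist_le_of_smul_subset {d : ℝ} (hST : S ⊆ T) (hT : IsBounded T) (hd : 0 ≤ d)
    (hTS : exp (-d) • T ⊆ S) : cdist S T ≤ d := by
  refine Real.iSup_le (fun ξ => ?_) hd
  have hξ := mem_sphere_zero_iff_norm.1 ξ.2
  exact abs_log_sub_log_le hd (rho_nonneg _ _) (rho_mono hST hT hξ)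
    (mul_rho_le_rho_of_smul_subset (exp_pos _) hTS (hT.subset hST) hξ)

end Distance

section Backward

variable {n m : ℕ} {A : Matrix (Fin n) (Fin n) ℝ} {B : Matrix (Fin n) (Fin m) ℝ}
  {X : Set (Euc n)} {U : Set (Euc m)} {lam : ℝ} {C D : Set (Euc n)}

lemma Q1_mono (h : C ⊆ D) : Q1 A B X U lam C ⊆ Q1 A B X U lam D := by
  rintro x ⟨hx, u, hu, hmem⟩
  exact ⟨hx, u, hu, smul_set_mono h hmem⟩

lemma Qiter_mono (h : C ⊆ D) (k : ℕ) : Qiter A B X U lam C k ⊆ Qiter A B X U lam D k := by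
  induction k with
  | zero => exact h
  | succ k ih => exact Q1_mono ih

lemma smul_Q1_subset (hX : StarConvex ℝ 0 X) (hU : StarConvex ℝ 0 U) {γ : ℝ} (hγ0 : 0 ≤ γ)
    (hγ1 : γ ≤ 1) (D : Set (Euc n)) : γ • Q1 A B X U lam D ⊆ Q1 A B X U lam (γ • D) := by
  rintro _ ⟨x, ⟨hx, u, hu, hmem⟩, rfl⟩
  refine ⟨hX.smul_mem hx hγ0 hγ1, γ • u, hU.smul_mem hu hγ0 hγ1, ?_⟩
  have hlin : WithLp.toLp 2 (A.mulVec (γ • x).ofLp + B.mulVec (γ • u).ofLp) =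
      γ • WithLp.toLp 2 (A.mulVec x + B.mulVec u) := by
    simp only [WithLp.ofLp_smul, Matrix.mulVec_smul, smul_add, WithLp.toLp_add, WithLp.toLp_smul]
  rw [hlin, smul_comm lam γ D]
  exact smul_mem_smul_set hmem

lemma smul_Qiter_subset (hX : StarConvex ℝ 0 X) (hU : StarConvex ℝ 0 U) {γ : ℝ} (hγ0 : 0 ≤ γ)
    (hγ1 : γ ≤ 1) (h : γ • D ⊆ C) (k : ℕ) :
    γ • Qiter A B X U lam D k ⊆ Qiter A B X U lam C k := by
  induction k with
  | zero => exact h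
  | succ k ih => exact (smul_Q1_subset hX hU hγ0 hγ1 _).trans (Q1_mono ih)

lemma isBounded_Qiter (hX : IsBounded X) (hD : IsBounded D) (k : ℕ) :
    IsBounded (Qiter A B X U lam D k) := by
  cases k with
  | zero => exact hD
  | succ k => exact hX.subset fun _ hx => hx.1

end Backward

theorem stmt7_general {n m : ℕ} (lam : ℝ)
    (A : Matrix (Fin n) (Fin n) ℝ) (B : Matrix (Fin n) (Fin m) ℝ)
    (X : Set (Euc n)) (U : Set (Euc m)) (hX : IsCSet X) (hU : IsCSet U) :
    ∀ k : ℕ, ∀ C D : Set (Euc n), IsCSet C → IsCSet D → C ⊆ D →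
      cdist (Qiter A B X U lam C k) (Qiter A B X U lam D k) ≤ cdist C D := by
  intro k C D hC hD hCD
  have hγ1 : exp (-cdist C D) ≤ 1 := exp_le_one_iff.2 (neg_nonpos.2 (cdist_nonneg C D))
  exact cdist_le_of_smul_subset (Qiter_mono hCD k)
    (isBounded_Qiter hX.2.1.isBounded hD.2.1.isBounded k) (cdist_nonneg C D)
    (smul_Qiter_subset hX.starConvex hU.starConvex (exp_pos _).le hγ1
      (exp_neg_cdist_smul_subset hC hD) k)

theorem stmt7 {n m : ℕ} (lam : ℝ) (hlam : lam ∈ Set.Ioc (0 : ℝ) 1)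
    (A : Matrix (Fin n) (Fin n) ℝ) (B : Matrix (Fin n) (Fin m) ℝ)
    (X : Set (Euc n)) (U : Set (Euc m)) (hX : IsCSet X) (hU : IsCSet U) :
    ∀ k : ℕ, ∀ C D : Set (Euc n), IsCSet C → IsCSet D → C ⊆ D →
      cdist (Qiter A B X U lam C k) (Qiter A B X U lam D k) ≤ cdist C D :=
  stmt7_general lam A B X U hX hU
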